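/- Let Q be a finite nonempty subset of ℝ^d (the query object) and let X_1, …, X_S be finite nonempty subsets of ℝ^d (the dataset objects) with L = min_j |X_j|. Let β, Γ ∈ (0,1] and c ≥ 1 be reals with Γ ≥ sqrt(2·ln(2/β) / (β² · |Q| · L)), and let R ≥ 0. On a probability space, for each j let {A^j_{(q,x)}}_{(q,x) ∈ Q×X_j} be mutually independent events such that P(A^j_{(q,x)}) ≤ β/2 whenever ‖q−x‖ > cR. Let FP be the (random) set of indices j such that Γdist(Q,X_j) > cR and at least (Γ + β/2)·|Q|·|X_j| of the events A^j_{(q,x)} occur. Then P(|FP| ≤ β·S) ≥ 1/2. -/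

import Mathlib

/-!
For an object `X` with `Γdist(Q, X) > cR`, fewer than `Γ·N` of its `N = |Q|·|X|` pairs are within
distance `cR`, and each remaining pair collides with probability at most `β/2`. So the expected
number of collisions stays at least `βΓN/2` below the threshold `(Γ + β/2)·N`, and Hoeffding's
inequality makes `X` a false positive with probability at most `exp(-β²Γ²N/2) ≤ β/2`; the lower
bound on `Γ` is exactly what the last inequality needs. Hence `E|FP| ≤ βS/2`, and Markov's
inequality gives `P(|FP| > βS) ≤ 1/2`.
-/

open MeasureTheory ProbabilityTheory

/-- The `R`-object similarity between two finite sets of feature vectors in `ℝ^d`: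
the fraction of pairs `(q, x) ∈ Q × X` whose Euclidean distance is at most `R`. -/
noncomputable def sim {d : ℕ} (Q X : Finset (EuclideanSpace ℝ (Fin d))) (R : ℝ) : ℝ :=
  (Set.ncard {p : EuclideanSpace ℝ (Fin d) × EuclideanSpace ℝ (Fin d) |
      p.1 ∈ Q ∧ p.2 ∈ X ∧ dist p.1 p.2 ≤ R} : ℝ) / ((Q.card : ℝ) * (X.card : ℝ))

/-- The `Γ`-distance between two finite sets of feature vectors:
`inf {R ≥ 0 : sim Q X R ≥ Γ}`. -/
noncomputable def gammaDist {d : ℕ} (Q X : Finset (EuclideanSpace ℝ (Fin d))) (Γ : ℝ) : ℝ :=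
  sInf {R : ℝ | 0 ≤ R ∧ Γ ≤ sim Q X R}

lemma ncard_setOf_mem_eq_sum_indicator {α ι : Type*} [Fintype ι] (A : ι → Set α) (x : α) :
    (Set.ncard {i | x ∈ A i} : ℝ) = ∑ i, (A i).indicator 1 x := by
  classical
  rw [Set.ncard_eq_toFinset_card', Set.toFinset_ofPred, Finset.card_filter]
  push_cast
  exact Finset.sum_congr rfl fun i _ => by by_cases h : x ∈ A i <;> simp [h]

section Counting

variable {Ω : Type*} [MeasurableSpace Ω] {μ : Measure Ω} {ι : Type*} [Fintype ι]

lemma measurable_ncard_setOf_mem {A : ι → Set Ω} (hA : ∀ i, MeasurableSet (A i)) :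
    Measurable fun ω => (Set.ncard {i | ω ∈ A i} : ℝ) := by
  simp_rw [ncard_setOf_mem_eq_sum_indicator]
  exact Finset.measurable_sum _ fun i _ => measurable_const.indicator (hA i)

variable [IsProbabilityMeasure μ]

lemma measureReal_sum_add_le_ncard_le {A : ι → Set Ω} (hA : ∀ i, MeasurableSet (A i))
    (hindep : iIndepSet A μ) {ε : ℝ} (hε : 0 ≤ ε) :
    μ.real {ω | ∑ i, μ.real (A i) + ε ≤ Set.ncard {i | ω ∈ A i}} ≤
      Real.exp (-2 * ε ^ 2 / Fintype.card ι) := by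
  set Y : ι → Ω → ℝ := fun i => (A i).indicator 1
  have hY : ∀ i, HasSubgaussianMGF (fun ω => Y i ω - μ[Y i]) ((‖(1 : ℝ) - 0‖₊ / 2) ^ 2) μ :=
    fun i => hasSubgaussianMGF_of_mem_Icc (measurable_const.indicator (hA i)).aemeasurable
      (ae_of_all _ fun ω => by by_cases h : ω ∈ A i <;> simp [Y, h])
  have hindep' : iIndepFun (fun i ω => Y i ω - μ[Y i]) μ := by
    exact (hindep.iIndepFun_indicator (β := ℝ)).comp (fun i (x : ℝ) => x - μ[Y i])
      fun i => measurable_id.sub_const _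
  have hoeffding := HasSubgaussianMGF.measure_sum_ge_le_of_iIndepFun hindep'
    (s := Finset.univ) (fun i _ => hY i) hε
  convert hoeffding using 2
  · ext ω
    simp only [ncard_setOf_mem_eq_sum_indicator, Set.mem_ofPred_eq, integral_indicator_one (hA _),
      Finset.sum_sub_distrib, Y]
    exact le_sub_iff_add_le'.symm
  · simp only [Finset.sum_const, Finset.card_univ, nsmul_eq_mul]
    push_cast
    norm_num
    ring

lemma measureReal_threshold_le_ncard_le_exp {A : ι → Set Ω} (hA : ∀ i, MeasurableSet (A i))
    (hindep : iIndepSet A μ) (near : Finset ι) {β Γ : ℝ} (hβ0 : 0 ≤ β) (hβ2 : β ≤ 2)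
    (hΓ : 0 ≤ Γ) (hfar : ∀ i ∉ near, μ.real (A i) ≤ β / 2)
    (hnear : (near.card : ℝ) ≤ Γ * Fintype.card ι) :
    μ.real {ω | (Γ + β / 2) * Fintype.card ι ≤ Set.ncard {i | ω ∈ A i}} ≤
      Real.exp (-(β ^ 2 * Γ ^ 2 * Fintype.card ι / 2)) := by
  classical
  set N : ℝ := (Fintype.card ι : ℝ)
  have hsum_near : ∑ i ∈ near, μ.real (A i) ≤ near.card :=
    (Finset.sum_le_card_nsmul _ _ 1 fun i _ => measureReal_le_one).trans_eq (by simp)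
  have hsum_far : ∑ i ∈ nearᶜ, μ.real (A i) ≤ nearᶜ.card * (β / 2) :=
    (Finset.sum_le_card_nsmul _ _ _ fun i hi => hfar i (Finset.mem_compl.mp hi)).trans_eq
      (nsmul_eq_mul ..)
  have hcard : (near.card : ℝ) + nearᶜ.card = N := by
    rw [← Nat.cast_add, Finset.card_add_card_compl]
  have hmargin : ∑ i, μ.real (A i) + β * Γ * N / 2 ≤ (Γ + β / 2) * N := by
    rw [← Finset.sum_add_sum_compl near]
    nlinarith [mul_nonneg (sub_nonneg.2 hβ2) (sub_nonneg.2 hnear)]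
  calc μ.real {ω | (Γ + β / 2) * N ≤ Set.ncard {i | ω ∈ A i}}
      ≤ μ.real {ω | ∑ i, μ.real (A i) + β * Γ * N / 2 ≤ Set.ncard {i | ω ∈ A i}} :=
        measureReal_mono fun ω hω => hmargin.trans hω
    _ ≤ Real.exp (-2 * (β * Γ * N / 2) ^ 2 / N) :=
        measureReal_sum_add_le_ncard_le hA hindep (by positivity)
    _ = Real.exp (-(β ^ 2 * Γ ^ 2 * N / 2)) := by
        rcases eq_or_ne N 0 with hN | hN
        · simp [hN]
        · field_simp

lemma one_sub_card_mul_div_le_measureReal_ncard_le {B : ι → Set Ω}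
    (hB : ∀ i, MeasurableSet (B i)) {δ a : ℝ} (hδ : ∀ i, μ.real (B i) ≤ δ) (ha : 0 < a) :
    1 - Fintype.card ι * δ / a ≤ μ.real {ω | (Set.ncard {i | ω ∈ B i} : ℝ) ≤ a} := by
  set f : Ω → ℝ := fun ω => Set.ncard {i | ω ∈ B i}
  have hf_sum : f = fun ω => ∑ i, (B i).indicator 1 ω :=
    funext (ncard_setOf_mem_eq_sum_indicator B)
  have hB_int : ∀ i, Integrable ((B i).indicator (1 : Ω → ℝ)) μ :=
    fun i => (integrable_const (1 : ℝ)).indicator (hB i)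
  have hf_integral : ∫ ω, f ω ∂μ ≤ Fintype.card ι * δ := by
    rw [hf_sum, integral_finsetSum _ fun i _ => hB_int i]
    simp_rw [integral_indicator_one (hB _)]
    exact (Finset.sum_le_card_nsmul _ _ _ fun i _ => hδ i).trans_eq (by simp)
  have hf_int : Integrable f μ := by
    rw [hf_sum]
    exact integrable_finsetSum _ fun i _ => hB_int i
  have hmarkov : a * μ.real {ω | a ≤ f ω} ≤ ∫ ω, f ω ∂μ :=
    mul_meas_ge_le_integral_of_nonneg (ae_of_all _ fun ω => Nat.cast_nonneg _) hf_int a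
  have hcompl : μ.real {ω | f ω ≤ a} = 1 - μ.real {ω | a < f ω} := by
    rw [← probReal_compl_eq_one_sub
      (measurableSet_lt measurable_const (measurable_ncard_setOf_mem hB))]
    simp [Set.compl_ofPred, f]
  have hlt : μ.real {ω | a < f ω} ≤ Fintype.card ι * δ / a := by
    rw [le_div_iff₀ ha, mul_comm]
    calc a * μ.real {ω | a < f ω} ≤ a * μ.real {ω | a ≤ f ω} :=
          mul_le_mul_of_nonneg_left (measureReal_mono fun ω (hω : a < f ω) => hω.le) ha.le
      _ ≤ Fintype.card ι * δ := hmarkov.trans hf_integral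
  linarith

end Counting

section GammaDist

variable {d : ℕ} (Q X : Finset (EuclideanSpace ℝ (Fin d)))

noncomputable def closePairs (r : ℝ) : Finset (Q ×ˢ X : Finset _) :=
  Finset.univ.filter fun p => dist p.1.1 p.1.2 ≤ r

lemma sim_eq_card_closePairs (r : ℝ) :
    sim Q X r = (closePairs Q X r).card / (Q.card * X.card) := by
  have hset : {p : EuclideanSpace ℝ (Fin d) × EuclideanSpace ℝ (Fin d) |
      p.1 ∈ Q ∧ p.2 ∈ X ∧ dist p.1 p.2 ≤ r} =
        Subtype.val '' (closePairs Q X r : Set (Q ×ˢ X : Finset _)) := by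
    ext ⟨a, b⟩
    simp [closePairs, and_comm, and_left_comm]
  rw [sim, hset, Set.ncard_image_of_injective _ Subtype.val_injective, Set.ncard_coe_finset]

variable {Q X}

lemma sim_lt_of_lt_gammaDist {Γ r : ℝ} (hr : 0 ≤ r) (h : r < gammaDist Q X Γ) :
    sim Q X r < Γ := by
  by_contra! hsim
  exact (csInf_le ⟨0, fun _ hy => hy.1⟩ ⟨hr, hsim⟩ : gammaDist Q X Γ ≤ r).not_gt h

lemma card_closePairs_lt_of_lt_gammaDist (hQ : Q.Nonempty) (hX : X.Nonempty) {Γ r : ℝ}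
    (hr : 0 ≤ r) (h : r < gammaDist Q X Γ) :
    ((closePairs Q X r).card : ℝ) < Γ * (Q.card * X.card) := by
  have hpos : (0 : ℝ) < Q.card * X.card := by
    have := hQ.card_pos; have := hX.card_pos; positivity
  rw [← div_lt_iff₀ hpos, ← sim_eq_card_closePairs]
  exact sim_lt_of_lt_gammaDist hr h

end GammaDist

lemma exp_neg_le_half_of_sqrt_le {β Γ M N : ℝ} (hβ : 0 < β) (hM : 0 < M) (hMN : M ≤ N)
    (hΓ : √(2 * Real.log (2 / β) / (β ^ 2 * M)) ≤ Γ) :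
    Real.exp (-(β ^ 2 * Γ ^ 2 * N / 2)) ≤ β / 2 := by
  obtain ⟨-, hsq⟩ := Real.sqrt_le_iff.mp hΓ
  rw [div_le_iff₀ (by positivity)] at hsq
  have hlog : Real.log (2 / β) ≤ β ^ 2 * Γ ^ 2 * N / 2 := by
    nlinarith [mul_le_mul_of_nonneg_left hMN (by positivity : 0 ≤ β ^ 2 * Γ ^ 2)]
  calc Real.exp (-(β ^ 2 * Γ ^ 2 * N / 2)) ≤ Real.exp (-Real.log (2 / β)) :=
        Real.exp_le_exp.mpr (neg_le_neg hlog)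
    _ = β / 2 := by rw [Real.exp_neg, Real.exp_log (by positivity), inv_div]

theorem stmt_9_general {d : ℕ} {Ω : Type*} [MeasurableSpace Ω] (μ : Measure Ω)
    [IsProbabilityMeasure μ]
    (Q : Finset (EuclideanSpace ℝ (Fin d))) (hQ : Q.Nonempty)
    (S : ℕ) (hS : 1 ≤ S)
    (Xs : Fin S → Finset (EuclideanSpace ℝ (Fin d))) (hXs : ∀ j, (Xs j).Nonempty)
    (L : ℕ) (hLle : ∀ j, L ≤ (Xs j).card) (hLmem : ∃ j, (Xs j).card = L)
    (β Γ c : ℝ) (hβpos : 0 < β) (hβ1 : β ≤ 1) (hΓpos : 0 < Γ) (hc : 1 ≤ c)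
    (hΓ : Γ ≥ Real.sqrt (2 * Real.log (2 / β) / (β ^ 2 * (Q.card * L : ℕ))))
    (R : ℝ) (hR : 0 ≤ R)
    (A : (j : Fin S) → (Q ×ˢ Xs j : Finset _) → Set Ω)
    (hAmeas : ∀ j p, MeasurableSet (A j p))
    (hindep : ∀ j, iIndepSet (A j) μ)
    (hPA : ∀ j, ∀ p : (Q ×ˢ Xs j : Finset _), c * R < dist p.1.1 p.1.2 →
      (μ (A j p)).toReal ≤ β / 2) :
    (1 : ℝ) / 2 ≤
      (μ {ω | (Set.ncard {j : Fin S | c * R < gammaDist Q (Xs j) Γ ∧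
          (Γ + β / 2) * ((Q.card * (Xs j).card : ℕ) : ℝ) ≤
            (Set.ncard {p : (Q ×ˢ Xs j : Finset _) | ω ∈ A j p} : ℝ)} : ℝ) ≤
        β * S}).toReal := by
  have hcR : 0 ≤ c * R := mul_nonneg (zero_le_one.trans hc) hR
  have hQL : (0 : ℝ) < (Q.card * L : ℕ) := by
    obtain ⟨j, rfl⟩ := hLmem
    exact_mod_cast Nat.mul_pos hQ.card_pos (hXs j).card_pos
  have hFP : ∀ j, μ.real {ω | c * R < gammaDist Q (Xs j) Γ ∧
      (Γ + β / 2) * ((Q.card * (Xs j).card : ℕ) : ℝ) ≤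
        Set.ncard {p : (Q ×ˢ Xs j : Finset _) | ω ∈ A j p}} ≤ β / 2 := by
    intro j
    by_cases hj : c * R < gammaDist Q (Xs j) Γ
    · have hN : Fintype.card (Q ×ˢ Xs j : Finset _) = Q.card * (Xs j).card := by simp
      have hbound := measureReal_threshold_le_ncard_le_exp (hAmeas j) (hindep j)
        (closePairs Q (Xs j) (c * R)) hβpos.le (by linarith) hΓpos.le
        (fun p hp => hPA j p (by simpa [closePairs] using hp))
        (by rw [hN]; exact_mod_cast (card_closePairs_lt_of_lt_gammaDist hQ (hXs j) hcR hj).le)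
      simp only [hj, true_and, ← hN]
      exact hbound.trans (exp_neg_le_half_of_sqrt_le hβpos hQL
        (by rw [hN]; exact_mod_cast Nat.mul_le_mul_left _ (hLle j)) hΓ)
    · simp only [hj, false_and, Set.ofPred_false, measureReal_empty]
      positivity
  have hFP_meas : ∀ j, MeasurableSet {ω | c * R < gammaDist Q (Xs j) Γ ∧
      (Γ + β / 2) * ((Q.card * (Xs j).card : ℕ) : ℝ) ≤
        Set.ncard {p : (Q ×ˢ Xs j : Finset _) | ω ∈ A j p}} := fun j =>
    (MeasurableSet.const _).inter
      (measurableSet_le measurable_const (measurable_ncard_setOf_mem (hAmeas j)))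
  calc (1 : ℝ) / 2 = 1 - Fintype.card (Fin S) * (β / 2) / (β * S) := by
        rw [Fintype.card_fin]
        field_simp
        ring
    _ ≤ _ := one_sub_card_mul_div_le_measureReal_ncard_le hFP_meas hFP (by positivity)

/-- Part P2 of the paper's Lemma 1: with probability at least 1/2 there are at most
`β·S` Γ-false positives among the `S` dataset objects. -/
theorem stmt_9 {d : ℕ} {Ω : Type*} [MeasurableSpace Ω] (μ : Measure Ω)
    [IsProbabilityMeasure μ]
    (Q : Finset (EuclideanSpace ℝ (Fin d))) (hQ : Q.Nonempty)
    (S : ℕ) (hS : 1 ≤ S)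
    (Xs : Fin S → Finset (EuclideanSpace ℝ (Fin d))) (hXs : ∀ j, (Xs j).Nonempty)
    (L : ℕ) (hLle : ∀ j, L ≤ (Xs j).card) (hLmem : ∃ j, (Xs j).card = L)
    (β Γ c : ℝ) (hβpos : 0 < β) (hβ1 : β ≤ 1) (hΓpos : 0 < Γ) (hΓ1 : Γ ≤ 1) (hc : 1 ≤ c)
    (hΓ : Γ ≥ Real.sqrt (2 * Real.log (2 / β) / (β ^ 2 * (Q.card * L : ℕ))))
    (R : ℝ) (hR : 0 ≤ R)
    (A : (j : Fin S) → (Q ×ˢ Xs j : Finset _) → Set Ω)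
    (hAmeas : ∀ j p, MeasurableSet (A j p))
    (hindep : ∀ j, iIndepSet (A j) μ)
    (hPA : ∀ j, ∀ p : (Q ×ˢ Xs j : Finset _), c * R < dist p.1.1 p.1.2 →
      (μ (A j p)).toReal ≤ β / 2) :
    (1 : ℝ) / 2 ≤
      (μ {ω | (Set.ncard {j : Fin S | c * R < gammaDist Q (Xs j) Γ ∧
          (Γ + β / 2) * ((Q.card * (Xs j).card : ℕ) : ℝ) ≤
            (Set.ncard {p : (Q ×ˢ Xs j : Finset _) | ω ∈ A j p} : ℝ)} : ℝ) ≤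
        β * S}).toReal :=
  stmt_9_general μ Q hQ S hS Xs hXs L hLle hLmem β Γ c hβpos hβ1 hΓpos hc hΓ R hR A hAmeas hindep
    hPA
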